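/- In a perfect REL-algebra, let a be an atom with a⌣ ≠ 0 and 1';a ≠ 0, and let Sa be the unique atom with Sa ≤ 1' and Sa;a = a. Then a⌣;1' ≠ 0 and the unique atom E(a⌣) ≤ 1' with a⌣;E(a⌣) = a⌣ equals Sa. -/
import Mathlib


class PerfectREL (α : Type*) [CompleteBooleanAlgebra α] [IsAtomic α] where
  comp : α → α → α
  conv : α → α
  id' : α
  ax2 : ∀ x y : α, conv (x ⊓ conv y) = conv x ⊓ y
  ax3l : ∀ x y z : α, comp (x ⊔ y) z = comp x z ⊔ comp y z
  ax3r : ∀ x y z : α, comp x (y ⊔ z) = comp x y ⊔ comp x z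
  ax4l : comp (⊤ : α) ⊥ = ⊥
  ax4r : comp (⊥ : α) ⊤ = ⊥
  ax5l : ∀ x y z : α, comp (conv x) y ⊓ z = comp (conv x) (y ⊓ comp (conv (conv x)) z) ⊓ z
  ax5r : ∀ x y z : α, comp x (conv y) ⊓ z = comp (x ⊓ comp z (conv (conv y))) (conv y) ⊓ z
  ax6l : ∀ x : α, comp id' x ≤ x
  ax6r : ∀ x : α, comp x id' ≤ x
  ax7 : comp (id' : α) id' = id'
  ax8 : comp ((conv (⊤ : α))ᶜ) ((conv (⊤ : α))ᶜ) ⊓ id' = ⊥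
  ax9a : ∀ x y z : α, comp (comp (x ⊓ id') y) z = comp (x ⊓ id') (comp y z)
  ax9b : ∀ x y z : α, comp (comp x (y ⊓ id')) z = comp x (comp (y ⊓ id') z)
  ax9c : ∀ x y z : α, comp (comp x y) (z ⊓ id') = comp x (comp y (z ⊓ id'))
  conv_sSup : ∀ S : Set α, conv (sSup S) = ⨆ x ∈ S, conv x
  comp_sSup_left : ∀ (S : Set α) (y : α), comp (sSup S) y = ⨆ x ∈ S, comp x y
  comp_sSup_right : ∀ (x : α) (S : Set α), comp x (sSup S) = ⨆ y ∈ S, comp x y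

open PerfectREL

variable {α : Type*} [CompleteBooleanAlgebra α] [IsAtomic α] [PerfectREL α]

private lemma conv_bot' : conv (⊥ : α) = ⊥ := by
  have h := conv_sSup (∅ : Set α)
  simpa using h

private lemma comp_bot_left' (y : α) : comp (⊥ : α) y = ⊥ := by
  have h := comp_sSup_left (∅ : Set α) y
  simpa using h

private lemma comp_mono_left' {x x' : α} (z : α) (h : x ≤ x') : comp x z ≤ comp x' z := by
  have h1 : x ⊔ x' = x' := sup_eq_right.mpr h
  calc comp x z ≤ comp x z ⊔ comp x' z := le_sup_left
    _ = comp (x ⊔ x') z := (ax3l x x' z).symm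
    _ = comp x' z := by rw [h1]

private lemma comp_mono_right' (x : α) {y y' : α} (h : y ≤ y') : comp x y ≤ comp x y' := by
  have h1 : y ⊔ y' = y' := sup_eq_right.mpr h
  calc comp x y ≤ comp x y ⊔ comp x y' := le_sup_left
    _ = comp x (y ⊔ y') := (ax3r x y y').symm
    _ = comp x y' := by rw [h1]

private lemma comp_bot_right' (x : α) : comp x (⊥ : α) = ⊥ := by
  have h := comp_sSup_right x (∅ : Set α)
  simpa using h

private lemma conv_le_conv_top' (x : α) : conv x ≤ conv (⊤ : α) := by
  have h := conv_sSup ({x, ⊤} : Set α)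
  have h2 : sSup ({x, ⊤} : Set α) = (⊤ : α) := by simp
  have h3 : (⨆ y ∈ ({x, ⊤} : Set α), conv y) = conv x ⊔ conv (⊤ : α) := by
    rw [iSup_insert, iSup_singleton]
  rw [h2, h3] at h
  exact le_trans le_sup_left h.symm.le

private lemma atom_le_of_inf_ne_bot' {p q : α} (hp : IsAtom p) (h : p ⊓ q ≠ ⊥) : p ≤ q := by
  rcases lt_or_eq_of_le (inf_le_left : p ⊓ q ≤ p) with hlt | heq
  · exact absurd (hp.2 _ hlt) h
  · exact inf_eq_left.mp heq

private lemma atom_eq_of_le' {p q : α} (hp : p ≠ ⊥) (hq : IsAtom q) (h : p ≤ q) : p = q := by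
  rcases lt_or_eq_of_le h with hlt | heq
  · exact absurd (hq.2 _ hlt) hp
  · exact heq

theorem E_conv_eq_S (a sa : α) (ha : IsAtom a) (hc : conv a ≠ (⊥ : α))
    (hst : comp id' a ≠ (⊥ : α))
    (hsa : IsAtom sa) (hsa1 : sa ≤ id') (hsa2 : comp sa a = a) :
    comp (conv a) id' ≠ (⊥ : α) ∧ comp (conv a) sa = conv a ∧
      ∀ e : α, IsAtom e → e ≤ id' → comp (conv a) e = conv a → e = sa := by
  -- basic facts about conv
  have hcc : ∀ x : α, conv (conv x) = conv (⊤ : α) ⊓ x := by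
    intro x
    have h := ax2 (⊤ : α) x
    simpa using h
  -- a ≤ conv ⊤
  have hac : a ≤ conv (⊤ : α) := by
    apply atom_le_of_inf_ne_bot' ha
    intro h0
    have h1 : conv (a ⊓ conv (⊤ : α)) = conv a := by
      have := ax2 a (⊤ : α)
      simpa using this
    rw [h0] at h1
    exact hc (h1.symm.trans conv_bot')
  have hcca : conv (conv a) = a := by
    rw [hcc a, inf_eq_right.mpr hac]
  -- conv a is an atom
  obtain ⟨b, hb, hba⟩ : ∃ b : α, IsAtom b ∧ b ≤ conv a := by
    rcases (IsAtomic.eq_bot_or_exists_atom_le (conv a)) with h | h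
    · exact absurd h hc
    · exact h
  have hbc : b ≤ conv (⊤ : α) := le_trans hba (conv_le_conv_top' a)
  have hconvb_ne : conv b ≠ ⊥ := by
    intro h0
    have h1 : conv (conv b) = conv (⊤ : α) ⊓ b := hcc b
    rw [h0, conv_bot'] at h1
    rw [inf_eq_right.mpr hbc] at h1
    exact hb.1 h1.symm
  have hconvb_le_a : conv b ≤ a := by
    have h1 : conv (b ⊓ conv a) = conv b ⊓ a := ax2 b a
    rw [inf_eq_left.mpr hba] at h1
    rw [h1]
    exact inf_le_right
  have hconvb : conv b = a := atom_eq_of_le' hconvb_ne ha hconvb_le_a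
  have hbconva : conv a = b := by
    have : conv (conv b) = conv (⊤ : α) ⊓ b := hcc b
    rw [hconvb, inf_eq_right.mpr hbc] at this
    exact this
  have hconva_atom : IsAtom (conv a) := hbconva ▸ hb
  -- Dedekind laws specialized to a
  have dedL : ∀ y z : α, comp (conv a) y ⊓ z = comp (conv a) (y ⊓ comp a z) ⊓ z := by
    intro y z
    have h := ax5l a y z
    rwa [hcca] at h
  have dedS : ∀ y z : α, comp a y ⊓ z = comp a (y ⊓ comp (conv a) z) ⊓ z := by
    intro y z
    have h := ax5l (conv a) y z
    rwa [hcca] at h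
  have dedR : ∀ x z : α, comp x a ⊓ z = comp (x ⊓ comp z (conv a)) a ⊓ z := by
    intro x z
    have h := ax5r x (conv a) z
    rwa [hcca] at h
  -- sa ≤ a ; conv a
  have hsa_le : sa ≤ comp a (conv a) := by
    apply atom_le_of_inf_ne_bot' hsa
    intro h0
    have h := dedR sa a
    rw [hsa2, inf_idem, h0, comp_bot_left', bot_inf_eq] at h
    exact ha.1 h
  -- conv a ≤ comp (conv a) sa
  have key : conv a ⊓ comp (conv a) sa ≠ ⊥ := by
    intro h0
    have h := dedS (conv a) sa
    rw [h0, comp_bot_right', bot_inf_eq, inf_eq_right.mpr hsa_le] at h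
    exact hsa.1 h
  have hge : conv a ≤ comp (conv a) sa := atom_le_of_inf_ne_bot' hconva_atom key
  have hle : comp (conv a) sa ≤ conv a :=
    le_trans (comp_mono_right' (conv a) hsa1) (ax6r (conv a))
  have goal2 : comp (conv a) sa = conv a := le_antisymm hle hge
  -- goal 1
  have goal1 : comp (conv a) id' ≠ (⊥ : α) := by
    intro h0
    have : comp (conv a) sa ≤ (⊥ : α) := h0 ▸ comp_mono_right' (conv a) hsa1
    rw [goal2] at this
    exact hc (le_bot_iff.mp this)
  refine ⟨goal1, goal2, ?_⟩
  -- uniqueness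
  intro e he he1 he2
  by_contra hne
  have hdisj : e ⊓ sa = ⊥ := by
    by_contra h0
    have h1 : e ≤ sa := atom_le_of_inf_ne_bot' he h0
    exact hne (atom_eq_of_le' he.1 hsa h1)
  have hesa : comp e sa = ⊥ := by
    have h1 : comp e sa ≤ e := le_trans (comp_mono_right' e hsa1) (ax6r e)
    have h2 : comp e sa ≤ sa := le_trans (comp_mono_left' sa he1) (ax6l sa)
    have := le_inf h1 h2
    rw [hdisj] at this
    exact le_bot_iff.mp this
  have h9 : comp (comp (conv a) e) sa = comp (conv a) (comp e sa) := by
    have h := ax9b (conv a) e sa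
    rwa [inf_eq_left.mpr he1] at h
  rw [he2, goal2, hesa] at h9
  exact hc (h9.trans (comp_bot_right' (conv a)))
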